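/- If D is an ∧-normal typing derivation in D∧Ω of x t₁ ⋯ tₙ : A with A ≠ ⊤ and last rule not an ∧-introduction, from assumptions none of whose types contains ⊤, then A does not contain ⊤. -/
import Mathlib


/-- Intersection types: type variables, ⊤, →, ∧. -/
inductive Ty : Type
  | tvar : ℕ → Ty
  | top : Ty
  | arr : Ty → Ty → Ty
  | inter : Ty → Ty → Ty
deriving DecidableEq

/-- Untyped λ-terms with named variables. -/
inductive Tm : Type
  | var : ℕ → Tm
  | app : Tm → Tm → Tm
  | lam : ℕ → Tm → Tm
deriving DecidableEq

/-- Substitution u[t/x] (Barendregt's convention is assumed throughout). -/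
def Tm.subst : Tm → ℕ → Tm → Tm
  | .var y, x, t => if y = x then t else .var y
  | .app u v, x, t => .app (u.subst x t) (v.subst x t)
  | .lam y u, x, t => if y = x then .lam y u else .lam y (u.subst x t)

/-- Free variables. -/
def Tm.fv : Tm → Set ℕ
  | .var y => {y}
  | .app u v => u.fv ∪ v.fv
  | .lam y u => u.fv \ {y}

/-- One-step β-reduction. -/
inductive Step : Tm → Tm → Prop
  | beta (x u v) : Step (.app (.lam x u) v) (u.subst x v)
  | appL {u u'} (v) : Step u u' → Step (.app u v) (.app u' v)
  | appR (u) {v v'} : Step v v' → Step (.app u v) (.app u v')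
  | lam (x) {u u'} : Step u u' → Step (.lam x u) (.lam x u')

/-- β-normal form. -/
def Tm.Normal (t : Tm) : Prop := ¬ ∃ t', Step t t'

/-- Strong normalization of a term under β-reduction. -/
def Tm.SN (t : Tm) : Prop := Acc (fun a b => Step b a) t

/-- Weak head reduction: (λx.u) v t₁ ⋯ tₙ ↦ u[v/x] t₁ ⋯ tₙ. -/
inductive Whr : Tm → Tm → Prop
  | beta (x u v) : Whr (.app (.lam x u) v) (u.subst x v)
  | app {t t'} (u) : Whr t t' → Whr (.app t u) (.app t' u)

def Tm.IsLam : Tm → Prop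
  | .lam _ _ => True
  | _ => False

/-- Leftmost (leftmost-outermost) redex reduction. -/
inductive Leftmost : Tm → Tm → Prop
  | beta (x u v) : Leftmost (.app (.lam x u) v) (u.subst x v)
  | lam (x) {u u'} : Leftmost u u' → Leftmost (.lam x u) (.lam x u')
  | appL {u u'} (v) : ¬ u.IsLam → Leftmost u u' → Leftmost (.app u v) (.app u' v)
  | appR (u) {v v'} : ¬ u.IsLam → u.Normal → Leftmost v v' → Leftmost (.app u v) (.app u v')

/-- A type does not contain ⊤. -/
def Ty.NoTop : Ty → Prop
  | .tvar _ => True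
  | .top => False
  | .arr A B => A.NoTop ∧ B.NoTop
  | .inter A B => A.NoTop ∧ B.NoTop

/-- Subformula relation on types. -/
inductive Ty.Sub : Ty → Ty → Prop
  | refl (A) : Ty.Sub A A
  | arrL {A B} (C) : Ty.Sub A B → Ty.Sub A (.arr B C)
  | arrR {A C} (B) : Ty.Sub A C → Ty.Sub A (.arr B C)
  | interL {A B} (C) : Ty.Sub A B → Ty.Sub A (.inter B C)
  | interR {A C} (B) : Ty.Sub A C → Ty.Sub A (.inter B C)

/-- Typing trees (raw derivation trees) of the natural deduction presentation. -/
inductive Dv : Type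
  | ax : ℕ → Ty → Dv            -- leaf x : A
  | topI : Tm → Dv              -- t : ⊤
  | arrI : ℕ → Ty → Dv → Dv     -- →-introduction, abstracting x of type A
  | arrE : Dv → Dv → Dv         -- →-elimination
  | andI : Dv → Dv → Dv         -- ∧-introduction
  | andE1 : Dv → Dv             -- ∧-elimination (left)
  | andE2 : Dv → Dv             -- ∧-elimination (right)

/-- The term typed at the root of a typing tree. -/
def Dv.term : Dv → Tm
  | .ax x _ => .var x
  | .topI t => t
  | .arrI x _ D => .lam x D.term
  | .arrE D E => .app D.term E.term
  | .andI D _ => D.term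
  | .andE1 D => D.term
  | .andE2 D => D.term

/-- Composition of derivations: substitute t for x throughout D and replace
every leaf x : A by the derivation E. -/
def Dv.comp : Dv → ℕ → Tm → Dv → Dv
  | .ax y A, x, _, E => if y = x then E else .ax y A
  | .topI u, x, t, _ => .topI (u.subst x t)
  | .arrI y A D, x, t, E => if y = x then .arrI y A D else .arrI y A (D.comp x t E)
  | .arrE D F, x, t, E => .arrE (D.comp x t E) (F.comp x t E)
  | .andI D F, x, t, E => .andI (D.comp x t E) (F.comp x t E)
  | .andE1 D, x, t, E => .andE1 (D.comp x t E)
  | .andE2 D, x, t, E => .andE2 (D.comp x t E)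

/-- `Deriv Γ D t A` : the tree D is a typing derivation of t : A in system D∧Ω,
from the assumptions given by Γ (each free-variable leaf x is typed Γ x;
in particular all leaves for a given variable carry the same type). -/
inductive Deriv : (ℕ → Ty) → Dv → Tm → Ty → Prop
  | ax (Γ : ℕ → Ty) (x) : Deriv Γ (.ax x (Γ x)) (.var x) (Γ x)
  | topI (Γ) (t) : Deriv Γ (.topI t) t .top
  | arrI {Γ x A D u B} : Deriv (Function.update Γ x A) D u B →
      Deriv Γ (.arrI x A D) (.lam x u) (.arr A B)
  | arrE {Γ D E t u A B} : Deriv Γ D t (.arr A B) → Deriv Γ E u A →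
      Deriv Γ (.arrE D E) (.app t u) B
  | andI {Γ D E t A B} : Deriv Γ D t A → Deriv Γ E t B →
      Deriv Γ (.andI D E) t (.inter A B)
  | andE1 {Γ D t A B} : Deriv Γ D t (.inter A B) → Deriv Γ (.andE1 D) t A
  | andE2 {Γ D t A B} : Deriv Γ D t (.inter A B) → Deriv Γ (.andE2 D) t B

/-- The tree is a derivation of system D: no ⊤-rule and all types ⊤-free. -/
def Dv.InD : Dv → Prop
  | .ax _ A => A.NoTop
  | .topI _ => False
  | .arrI _ A D => A.NoTop ∧ D.InD
  | .arrE D E => D.InD ∧ E.InD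
  | .andI D E => D.InD ∧ E.InD
  | .andE1 D => D.InD
  | .andE2 D => D.InD

/-- The last rule is an ∧-introduction. -/
def Dv.IsAndI : Dv → Prop
  | .andI _ _ => True
  | _ => False

/-- ∧-normal: no ∧-introduction immediately followed by an ∧-elimination. -/
def Dv.AndNormal : Dv → Prop
  | .ax _ _ => True
  | .topI _ => True
  | .arrI _ _ D => D.AndNormal
  | .arrE D E => D.AndNormal ∧ E.AndNormal
  | .andI D E => D.AndNormal ∧ E.AndNormal
  | .andE1 D => D.AndNormal ∧ ¬ D.IsAndI
  | .andE2 D => D.AndNormal ∧ ¬ D.IsAndI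

/-- The reduction relation ⇝ on typing derivations. -/
inductive Red : Dv → Dv → Prop
  | beta (x A D E) : Red (.arrE (.arrI x A D) E) (D.comp x E.term E)
  | and1 (D E) : Red (.andE1 (.andI D E)) D
  | and2 (D E) : Red (.andE2 (.andI D E)) E
  | arrI (x A) {D D'} : Red D D' → Red (.arrI x A D) (.arrI x A D')
  | andE1 {D D'} : Red D D' → Red (.andE1 D) (.andE1 D')
  | andE2 {D D'} : Red D D' → Red (.andE2 D) (.andE2 D')
  | andI {D D' E E'} : Red D D' → Red E E' → D'.term = E'.term →
      Red (.andI D E) (.andI D' E')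
  | arrE1 {D D'} (E) : Red D D' → Red (.arrE D E) (.arrE D' E)
  | arrE2 (D) {E E'} : Red E E' → Red (.arrE D E) (.arrE D E')

/-- Normal derivation: no ⇝-step applies. -/
def Dv.Normal (D : Dv) : Prop := ¬ ∃ D', Red D D'

/-- Subtree (subderivation) relation on typing trees. -/
inductive Dv.Subtree : Dv → Dv → Prop
  | refl (D) : Dv.Subtree D D
  | arrI {D E} (x A) : Dv.Subtree D E → Dv.Subtree D (.arrI x A E)
  | arrEL {D E F} : Dv.Subtree D E → Dv.Subtree D (.arrE E F)
  | arrER {D E F} : Dv.Subtree D F → Dv.Subtree D (.arrE E F)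
  | andIL {D E F} : Dv.Subtree D E → Dv.Subtree D (.andI E F)
  | andIR {D E F} : Dv.Subtree D F → Dv.Subtree D (.andI E F)
  | andE1 {D E} : Dv.Subtree D E → Dv.Subtree D (.andE1 E)
  | andE2 {D E} : Dv.Subtree D E → Dv.Subtree D (.andE2 E)

/-- The term x t₁ ⋯ tₙ : a variable applied to a list of arguments. -/
def appList (x : ℕ) (ts : List Tm) : Tm := ts.foldl Tm.app (Tm.var x)


def Tm.Hv : Tm → ℕ → Prop
  | .var y, x => y = x
  | .app u _, x => u.Hv x
  | .lam _ _, _ => False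

lemma hv_foldl {x : ℕ} : ∀ (ts : List Tm) (u : Tm), u.Hv x →
    (ts.foldl Tm.app u).Hv x := by
  intro ts
  induction ts with
  | nil => intro u h; exact h
  | cons t ts ih => intro u h; exact ih _ h

lemma hv_appList (x : ℕ) (ts : List Tm) : (appList x ts).Hv x :=
  hv_foldl ts _ rfl

lemma hv_fv {t : Tm} {x : ℕ} (h : t.Hv x) : x ∈ t.fv := by
  induction t with
  | var y => simp [Tm.fv]; exact h.symm
  | app u v ihu _ => exact Or.inl (ihu h)
  | lam y u ih => exact absurd h id

lemma sub_arr {A B C : Ty} (h : Ty.Sub (.arr A B) C) : Ty.Sub B C := by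
  induction h with
  | refl => exact .arrR _ (.refl _)
  | arrL C _ ih => exact .arrL _ ih
  | arrR B _ ih => exact .arrR _ ih
  | interL C _ ih => exact .interL _ ih
  | interR B _ ih => exact .interR _ ih

lemma sub_inter1 {A B C : Ty} (h : Ty.Sub (.inter A B) C) : Ty.Sub A C := by
  induction h with
  | refl => exact .interL _ (.refl _)
  | arrL C _ ih => exact .arrL _ ih
  | arrR B _ ih => exact .arrR _ ih
  | interL C _ ih => exact .interL _ ih
  | interR B _ ih => exact .interR _ ih

lemma sub_inter2 {A B C : Ty} (h : Ty.Sub (.inter A B) C) : Ty.Sub B C := by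
  induction h with
  | refl => exact .interR _ (.refl _)
  | arrL C _ ih => exact .arrL _ ih
  | arrR B _ ih => exact .arrR _ ih
  | interL C _ ih => exact .interL _ ih
  | interR B _ ih => exact .interR _ ih

lemma sub_noTop {A B : Ty} (h : Ty.Sub A B) (hB : B.NoTop) : A.NoTop := by
  induction h with
  | refl => exact hB
  | arrL C _ ih => exact ih hB.1
  | arrR B _ ih => exact ih hB.2
  | interL C _ ih => exact ih hB.1
  | interR B _ ih => exact ih hB.2

lemma isAndI_inter {Γ : ℕ → Ty} {D : Dv} {t : Tm} {A : Ty}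
    (h : Deriv Γ D t A) (hi : D.IsAndI) : ∃ B C, A = .inter B C := by
  cases h <;> simp_all [Dv.IsAndI]

lemma head_var_sub {Γ : ℕ → Ty} {D : Dv} {t : Tm} {A : Ty} {x : ℕ}
    (hD : Deriv Γ D t A) (hhv : t.Hv x) (hnorm : D.AndNormal)
    (hlast : ¬ D.IsAndI) (hA : A ≠ .top) : Ty.Sub A (Γ x) := by
  induction hD with
  | ax Γ y =>
      cases hhv
      exact .refl _
  | topI => exact absurd rfl hA
  | arrI _ => exact absurd hhv id
  | arrE hD hE ihD _ =>
      have h := ihD hhv hnorm.1 (by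
        intro h
        obtain ⟨B, C, e⟩ := isAndI_inter hD h
        cases e) (by intro h; cases h)
      exact sub_arr h
  | andI _ _ _ _ => exact absurd trivial hlast
  | andE1 hD ih =>
      have h := ih hhv hnorm.1 hnorm.2 (by intro h; cases h)
      exact sub_inter1 h
  | andE2 hD ih =>
      have h := ih hhv hnorm.1 hnorm.2 (by intro h; cases h)
      exact sub_inter2 h

/-- For head-variable terms, if no assumption type contains ⊤ then the
(non-⊤) conclusion type of an ∧-normal derivation not ending in ∧-introduction
does not contain ⊤. -/
theorem head_var_no_top {Γ : ℕ → Ty} {D : Dv} {x : ℕ} {ts : List Tm} {A : Ty}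
    (hD : Deriv Γ D (appList x ts) A) (hnorm : D.AndNormal) (hA : A ≠ .top)
    (hlast : ¬ D.IsAndI)
    (hctx : ∀ y ∈ (appList x ts).fv, (Γ y).NoTop) : A.NoTop := by
  have hhv := hv_appList x ts
  exact sub_noTop (head_var_sub hD hhv hnorm hlast hA) (hctx x (hv_fv hhv))
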